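/- arXiv:1711.10670 — 5 statements merged into one kernel-verified Lean document; each statement's English description precedes it below -/
import Mathlib

section
/- For every n ≥ 1, the sum over all Dyck paths D of semilength n of the product, over all up-steps s of D, of (h(s)+1), equals (2n-1)!!, where h(s) is the y-coordinate of the lower endpoint of step s. -/
open Finset

/-- A Dyck path of semilength `n`, encoded as `f : Fin (2n) → Bool`
(`true` = up-step `(1,1)`, `false` = down-step `(1,-1)`): exactly `n` up-steps,
and every prefix has at least as many up-steps as down-steps. -/
def IsDyck {n : ℕ} (f : Fin (2 * n) → Bool) : Prop :=
  (univ.filter (fun i => f i = true)).card = n ∧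
  ∀ k : Fin (2 * n),
    (univ.filter (fun j => j < k ∧ f j = false)).card ≤
      (univ.filter (fun j => j < k ∧ f j = true)).card

instance {n : ℕ} : DecidablePred (@IsDyck n) := fun _ => by
  unfold IsDyck; infer_instance

/-!
Let `W(m, h)` be the weighted count of paths with `m` steps that start at height `h`, end at
height `0` and never go below `0`, an up-step from height `y` having weight `y + 1`.
Splitting off the first step gives `W(m + 1, h) = (h + 1) W(m, h + 1) + W(m, h - 1)`, the last
term being absent for `h = 0`. For `m ≡ h (mod 2)` this recurrence with `W(0, h) = [h = 0]` is
solved by `W(m, h) = C(m, h) (m - h - 1)!!`, and the theorem is the case `m = 2n`, `h = 0`.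
-/

open scoped Nat

lemma Fin.sum_filter_cons {m : ℕ} {α β : Type*} [Fintype α] [DecidableEq α] [AddCommMonoid β]
    (p : (Fin (m + 1) → α) → Prop) [DecidablePred p] (F : (Fin (m + 1) → α) → β) :
    ∑ f ∈ univ.filter p, F f =
      ∑ a, ∑ g ∈ univ.filter (fun g => p (Fin.cons a g)), F (Fin.cons a g) := by
  rw [sum_filter, ← (Fin.consEquiv fun _ => α).sum_comp, Fintype.sum_prod_type]
  simp only [sum_filter]
  rfl

lemma Nat.choose_mul_doubleFactorial_recurrence (m h : ℕ) (hmh : Even (m + h)) :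
    (h + 2) * (m.choose (h + 2) * (m - (h + 2) - 1)‼) + m.choose h * (m - h - 1)‼ =
      (m + 1).choose (h + 1) * (m + 1 - (h + 1) - 1)‼ := by
  rcases le_or_gt (h + 2) m with hle | hlt
  · obtain ⟨k, rfl⟩ := Nat.exists_eq_add_of_le hle
    have hchoose := Nat.choose_succ_right_eq (h + 2 + k) (h + 1)
    rw [show h + 2 + k - (h + 1) = k + 1 by omega] at hchoose
    rw [show h + 2 + k - (h + 2) - 1 = k - 1 by omega, show h + 2 + k - h - 1 = k + 1 by omega,
      show h + 2 + k + 1 - (h + 1) - 1 = k + 1 by omega, Nat.doubleFactorial_add_one,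
      Nat.choose_succ_succ', ← mul_assoc, mul_comm (h + 2), hchoose]
    ring
  · obtain rfl | hlt' : m = h ∨ m < h := by
      rcases hmh with ⟨r, hr⟩
      omega
    · simp [Nat.choose_eq_zero_of_lt]
    · rw [Nat.choose_eq_zero_of_lt hlt', Nat.choose_eq_zero_of_lt (by omega : m < h + 2),
        Nat.choose_eq_zero_of_lt (by omega : m + 1 < h + 1)]
      simp

namespace Dyck

variable {m : ℕ}

def numSteps (f : Fin m → Bool) (c : Bool) : ℕ := #(univ.filter fun j => f j = c)

def numStepsBefore (f : Fin m → Bool) (c : Bool) (i : Fin m) : ℕ :=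
  #(univ.filter fun j => j < i ∧ f j = c)

def IsDyckFrom (h : ℕ) (f : Fin m → Bool) : Prop :=
  numSteps f false = numSteps f true + h ∧
    ∀ k, numStepsBefore f false k ≤ numStepsBefore f true k + h

instance (h : ℕ) : DecidablePred (IsDyckFrom (m := m) h) := fun _ => by
  unfold IsDyckFrom; infer_instance

/-- `h` is added on the right so that `upWeight 0 f` is literally the weight in `stmt_5`; the
truncated subtraction is exact on paths satisfying `IsDyckFrom h`. -/
def upWeight (h : ℕ) (f : Fin m → Bool) : ℕ :=
  ∏ i ∈ univ.filter (fun i => f i = true),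
    (numStepsBefore f true i + h - numStepsBefore f false i + 1)

def dyckWeight (m h : ℕ) : ℕ :=
  ∑ f ∈ univ.filter (IsDyckFrom (m := m) h), upWeight h f

lemma numSteps_cons (b : Bool) (g : Fin m → Bool) (c : Bool) :
    numSteps (Fin.cons b g : Fin (m + 1) → Bool) c = numSteps g c + if b = c then 1 else 0 := by
  simp only [numSteps, card_filter, Fin.sum_univ_succ, Fin.cons_zero, Fin.cons_succ]
  omega

@[simp]
lemma numStepsBefore_zero (f : Fin (m + 1) → Bool) (c : Bool) : numStepsBefore f c 0 = 0 := by
  simp [numStepsBefore]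

lemma numStepsBefore_cons_succ (b : Bool) (g : Fin m → Bool) (c : Bool) (i : Fin m) :
    numStepsBefore (Fin.cons b g : Fin (m + 1) → Bool) c i.succ =
      numStepsBefore g c i + if b = c then 1 else 0 := by
  simp only [numStepsBefore, card_filter, Fin.sum_univ_succ, Fin.cons_zero, Fin.cons_succ,
    Fin.succ_lt_succ_iff, Fin.succ_pos, true_and]
  omega

lemma isDyckFrom_cons_iff (b : Bool) (g : Fin m → Bool) (h : ℕ) :
    IsDyckFrom h (Fin.cons b g : Fin (m + 1) → Bool) ↔
      numSteps g false + (if b then 0 else 1) = numSteps g true + (if b then 1 else 0) + h ∧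
        ∀ k, numStepsBefore g false k + (if b then 0 else 1) ≤
          numStepsBefore g true k + (if b then 1 else 0) + h := by
  simp only [IsDyckFrom, Fin.forall_fin_succ, numStepsBefore_zero, zero_le, true_and,
    numSteps_cons, numStepsBefore_cons_succ]
  cases b <;> simp

lemma isDyckFrom_cons_true (g : Fin m → Bool) (h : ℕ) :
    IsDyckFrom h (Fin.cons true g : Fin (m + 1) → Bool) ↔ IsDyckFrom (h + 1) g := by
  rw [isDyckFrom_cons_iff, IsDyckFrom]
  exact and_congr (by simp only [if_true]; omega)
    (forall_congr' fun k => by simp only [if_true]; omega)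

lemma isDyckFrom_cons_false (g : Fin m → Bool) (h : ℕ) :
    IsDyckFrom (h + 1) (Fin.cons false g : Fin (m + 1) → Bool) ↔ IsDyckFrom h g := by
  rw [isDyckFrom_cons_iff, IsDyckFrom]
  exact and_congr (by simp only [Bool.false_eq_true, if_false]; omega)
    (forall_congr' fun k => by simp only [Bool.false_eq_true, if_false]; omega)

lemma not_isDyckFrom_zero_cons_false (g : Fin m → Bool) :
    ¬ IsDyckFrom 0 (Fin.cons false g : Fin (m + 1) → Bool) := by
  rw [isDyckFrom_cons_iff]
  rintro ⟨h1, h2⟩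
  cases m with
  | zero => simp [numSteps] at h1
  | succ m => simpa using h2 0

lemma upWeight_cons_true (g : Fin m → Bool) (h : ℕ) :
    upWeight h (Fin.cons true g : Fin (m + 1) → Bool) = (h + 1) * upWeight (h + 1) g := by
  simp only [upWeight, prod_filter, Fin.prod_univ_succ, Fin.cons_zero, Fin.cons_succ,
    numStepsBefore_zero, numStepsBefore_cons_succ]
  congr 1
  · simp
  · refine prod_congr rfl fun i _ => ?_
    simp only [if_true, Bool.true_eq_false, if_false]
    congr 2
    omega

lemma upWeight_cons_false (g : Fin m → Bool) (h : ℕ) :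
    upWeight (h + 1) (Fin.cons false g : Fin (m + 1) → Bool) = upWeight h g := by
  simp only [upWeight, prod_filter, Fin.prod_univ_succ, Fin.cons_zero, Fin.cons_succ,
    numStepsBefore_cons_succ]
  simp only [Bool.false_eq_true, if_false, if_true, one_mul]
  refine prod_congr rfl fun i _ => ?_
  congr 2
  omega

lemma dyckWeight_succ (m h : ℕ) :
    dyckWeight (m + 1) h = (h + 1) * dyckWeight m (h + 1) +
      ∑ g ∈ univ.filter
          (fun g : Fin m → Bool => IsDyckFrom h (Fin.cons false g : Fin (m + 1) → Bool)),
        upWeight h (Fin.cons false g : Fin (m + 1) → Bool) := by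
  simp only [dyckWeight, Fin.sum_filter_cons, Fintype.sum_bool, isDyckFrom_cons_true,
    upWeight_cons_true, mul_sum]

lemma dyckWeight_succ_zero (m : ℕ) : dyckWeight (m + 1) 0 = dyckWeight m 1 := by
  simp [dyckWeight_succ, not_isDyckFrom_zero_cons_false]

lemma dyckWeight_succ_succ (m h : ℕ) :
    dyckWeight (m + 1) (h + 1) = (h + 2) * dyckWeight m (h + 2) + dyckWeight m h := by
  simp only [dyckWeight_succ, isDyckFrom_cons_false, upWeight_cons_false]
  rfl

@[simp]
lemma dyckWeight_zero_zero : dyckWeight 0 0 = 1 := by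
  simp [dyckWeight, upWeight, IsDyckFrom, numSteps, filter_singleton]

@[simp]
lemma dyckWeight_zero_succ (h : ℕ) : dyckWeight 0 (h + 1) = 0 := by
  simp [dyckWeight, IsDyckFrom, numSteps, filter_singleton]

theorem dyckWeight_eq (m h : ℕ) (hmh : Even (m + h)) :
    dyckWeight m h = m.choose h * (m - h - 1)‼ := by
  induction m generalizing h with
  | zero => rcases h with _ | h <;> simp
  | succ m ih =>
    rcases h with _ | h
    · obtain ⟨k, rfl⟩ : ∃ k, m = k + 1 := Nat.exists_eq_add_one.mpr (by grind)
      rw [dyckWeight_succ_zero, ih 1 (by grind), show k + 1 + 1 - 0 - 1 = k + 1 by omega,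
        Nat.doubleFactorial_add_one]
      simp
    · rw [dyckWeight_succ_succ, ih (h + 2) (by grind), ih h (by grind),
        Nat.choose_mul_doubleFactorial_recurrence m h (by grind)]

lemma numSteps_true_add_numSteps_false (f : Fin m → Bool) :
    numSteps f true + numSteps f false = m := by
  simpa [numSteps] using card_filter_add_card_filter_not (s := univ) (p := fun i => f i = true)

lemma isDyck_iff_isDyckFrom_zero {n : ℕ} (f : Fin (2 * n) → Bool) :
    IsDyck f ↔ IsDyckFrom 0 f := by
  have := numSteps_true_add_numSteps_false f
  exact and_congr (by unfold numSteps at this ⊢; omega) Iff.rfl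

end Dyck

theorem stmt_5_general (n : ℕ) :
    ∑ f ∈ univ.filter (fun f : Fin (2 * n) → Bool => IsDyck f),
      ∏ i ∈ univ.filter (fun i => f i = true),
        ((univ.filter (fun j => j < i ∧ f j = true)).card -
          (univ.filter (fun j => j < i ∧ f j = false)).card + 1)
      = Nat.doubleFactorial (2 * n - 1) := by
  rw [filter_congr fun f _ => Dyck.isDyck_iff_isDyckFrom_zero f]
  exact (Dyck.dyckWeight_eq (2 * n) 0 (by simp)).trans (by simp)

/-- The sum over all Dyck paths of semilength `n ≥ 1` of the product over all
up-steps `s` of `h(s) + 1`, where `h(s)` is the height of the lower endpoint of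
`s`, equals the double factorial `(2n-1)!!`. -/
theorem stmt_5 (n : ℕ) (hn : 1 ≤ n) :
    ∑ f ∈ univ.filter (fun f : Fin (2 * n) → Bool => IsDyck f),
      ∏ i ∈ univ.filter (fun i => f i = true),
        ((univ.filter (fun j => j < i ∧ f j = true)).card -
          (univ.filter (fun j => j < i ∧ f j = false)).card + 1)
      = Nat.doubleFactorial (2 * n - 1) :=
  stmt_5_general n
end

section
/- The number of walks of length 2n in Young's lattice that start and end at the empty partition equals (2n-1)!!. -/
/-- A partition, encoded as a multiset of positive part sizes, with `b` obtained
from `a` by adding a single box: either a part is increased by one, or a new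
part of size one is created. -/
def AddBox (a b : Multiset ℕ) : Prop :=
  (∃ x ∈ a, b = (x + 1) ::ₘ a.erase x) ∨ b = 1 ::ₘ a

/-- A walk of length `2n` in Young's lattice: a sequence of `2n+1` partitions
(multisets of positive integers) in which consecutive partitions differ by
exactly one box. -/
def YoungWalk (n : ℕ) (P : Fin (2 * n + 1) → Multiset ℕ) : Prop :=
  (∀ i, ∀ x ∈ P i, 0 < x) ∧
  ∀ i : Fin (2 * n), AddBox (P i.castSucc) (P i.succ) ∨ AddBox (P i.succ) (P i.castSucc)

namespace YW

def upmap (a : Multiset ℕ) (x : ℕ) : Multiset ℕ := (x + 1) ::ₘ a.erase x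

def dnmap (a : Multiset ℕ) (y : ℕ) : Multiset ℕ := ((y - 1) ::ₘ a.erase y).erase 0

def upN (a : Multiset ℕ) : Finset (Multiset ℕ) := (0 ::ₘ a).toFinset.image (upmap a)

def dnN (a : Multiset ℕ) : Finset (Multiset ℕ) := a.toFinset.image (dnmap a)

lemma count_erase_le (z : ℕ) (a : Multiset ℕ) (w : ℕ) :
    Multiset.count z (a.erase w) ≤ Multiset.count z a :=
  Multiset.count_le_of_le z (Multiset.erase_le w a)

lemma upmap_inj {a : Multiset ℕ} {x x' : ℕ} (h : upmap a x = upmap a x') : x = x' := by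
  by_contra hne
  have h1 := congrArg (Multiset.count (x + 1)) h
  unfold upmap at h1
  rw [Multiset.count_cons, Multiset.count_cons, if_pos rfl,
    if_neg (by omega : ¬ x + 1 = x' + 1), Multiset.count_erase_of_ne (by omega)] at h1
  have h2 := count_erase_le (x + 1) a x'
  omega

lemma dnmap_one {a : Multiset ℕ} : dnmap a 1 = a.erase 1 := by
  unfold dnmap
  simp [Multiset.erase_cons_head]

lemma dnmap_of_one_lt {a : Multiset ℕ} (ha : 0 ∉ a) {y : ℕ} (hy : 1 < y) :
    dnmap a y = (y - 1) ::ₘ a.erase y := by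
  unfold dnmap
  apply Multiset.erase_of_notMem
  intro hc
  rcases Multiset.mem_cons.1 hc with h | h
  · omega
  · exact ha (Multiset.mem_of_mem_erase h)

lemma count_dnmap_self {a : Multiset ℕ} (ha : 0 ∉ a) {y : ℕ} (hy : y ∈ a) :
    Multiset.count y (dnmap a y) = Multiset.count y a - 1 := by
  have hy1 : 1 ≤ y := Nat.one_le_iff_ne_zero.2 (fun h => ha (h ▸ hy))
  by_cases h1 : y = 1
  · subst h1; rw [dnmap_one, Multiset.count_erase_self]
  · rw [dnmap_of_one_lt ha (by omega), Multiset.count_cons,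
      Multiset.count_erase_self, if_neg (by omega)]
    omega

lemma count_dnmap_other {a : Multiset ℕ} (ha : 0 ∉ a) {y y' : ℕ} (hy' : y' ∈ a) (hne : y ≠ y') :
    Multiset.count y a ≤ Multiset.count y (dnmap a y') := by
  have hy1 : 1 ≤ y' := Nat.one_le_iff_ne_zero.2 (fun h => ha (h ▸ hy'))
  by_cases h1 : y' = 1
  · subst h1; rw [dnmap_one, Multiset.count_erase_of_ne hne]
  · rw [dnmap_of_one_lt ha (by omega), Multiset.count_cons,
      Multiset.count_erase_of_ne hne]
    omega

lemma dnmap_inj {a : Multiset ℕ} (ha : 0 ∉ a) {y y' : ℕ} (hy : y ∈ a) (hy' : y' ∈ a)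
    (h : dnmap a y = dnmap a y') : y = y' := by
  by_contra hne
  have h1 := congrArg (Multiset.count y) h
  rw [count_dnmap_self ha hy] at h1
  have h2 := count_dnmap_other ha hy' hne
  have h3 : 1 ≤ Multiset.count y a := Multiset.one_le_count_iff_mem.2 hy
  omega

lemma nomem_zero_dnmap {a : Multiset ℕ} (ha : 0 ∉ a) (y : ℕ) : 0 ∉ dnmap a y := by
  intro hc
  have h1 : Multiset.count 0 (dnmap a y) = 0 := by
    unfold dnmap
    rw [Multiset.count_erase_self, Multiset.count_cons]
    have h2 := count_erase_le 0 a y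
    have h3 : Multiset.count 0 a = 0 := Multiset.count_eq_zero.2 ha
    by_cases hy0 : (0:ℕ) = y - 1
    · rw [if_pos hy0]; omega
    · rw [if_neg hy0]; omega
  exact (Multiset.count_eq_zero.1 h1) hc

lemma nomem_zero_upmap {a : Multiset ℕ} (ha : 0 ∉ a) (x : ℕ) : 0 ∉ upmap a x := by
  intro hc
  rcases Multiset.mem_cons.1 hc with h | h
  · omega
  · exact ha (Multiset.mem_of_mem_erase h)

lemma dnmap_upmap_self {a : Multiset ℕ} (ha : 0 ∉ a) {x : ℕ} (hx : x ∈ 0 ::ₘ a) :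
    dnmap (upmap a x) (x + 1) = a := by
  unfold dnmap upmap
  rw [Multiset.erase_cons_head]
  simp only [Nat.add_sub_cancel]
  rcases Multiset.mem_cons.1 hx with h | h
  · subst h
    rw [Multiset.erase_of_notMem ha, Multiset.erase_cons_head]
  · rw [Multiset.cons_erase h]
    exact Multiset.erase_of_notMem ha

lemma mem_cons_self_of_mem {a : Multiset ℕ} {y : ℕ} (hy : y ∈ a) :
    y - 1 ∈ 0 ::ₘ dnmap a y := by
  by_cases h1 : y - 1 = 0
  · rw [h1]; exact Multiset.mem_cons_self _ _
  · apply Multiset.mem_cons_of_mem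
    unfold dnmap
    rw [Multiset.mem_erase_of_ne h1]
    exact Multiset.mem_cons_self _ _

lemma upmap_dnmap_self {a : Multiset ℕ} (ha : 0 ∉ a) {y : ℕ} (hy : y ∈ a) :
    upmap (dnmap a y) (y - 1) = a := by
  have hy1 : 1 ≤ y := Nat.one_le_iff_ne_zero.2 (fun h => ha (h ▸ hy))
  by_cases h1 : y = 1
  · subst h1
    unfold upmap
    rw [dnmap_one]
    rw [Multiset.erase_of_notMem (fun hc => ha (Multiset.mem_of_mem_erase hc))]
    exact Multiset.cons_erase hy
  · unfold upmap
    rw [dnmap_of_one_lt ha (by omega), Multiset.erase_cons_head,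
      Nat.sub_add_cancel hy1]
    exact Multiset.cons_erase hy

lemma swap_identity {a : Multiset ℕ} (ha : 0 ∉ a) {x y : ℕ} (hy : y ∈ a) (hxy : y ≠ x + 1) :
    dnmap (upmap a x) y = upmap (dnmap a y) x := by
  have hy1 : 1 ≤ y := Nat.one_le_iff_ne_zero.2 (fun h => ha (h ▸ hy))
  have he0 : (0 : ℕ) ∉ (a.erase x).erase y :=
    fun hc => ha (Multiset.mem_of_mem_erase (Multiset.mem_of_mem_erase hc))
  have hstep : (upmap a x).erase y = (x + 1) ::ₘ ((a.erase x).erase y) :=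
    Multiset.erase_cons_tail _ (by omega)
  by_cases h1 : y = 1
  · subst h1
    have lhs : dnmap (upmap a x) 1 = (x + 1) ::ₘ ((a.erase x).erase 1) := by
      rw [dnmap_one, hstep]
    rw [lhs, dnmap_one]
    unfold upmap
    rw [Multiset.erase_comm]
  · have hne : (1:ℕ) < y := by omega
    have lhs : dnmap (upmap a x) y = (y - 1) ::ₘ (x + 1) ::ₘ ((a.erase x).erase y) := by
      rw [dnmap_of_one_lt (nomem_zero_upmap ha x) hne, hstep]
    rw [lhs, dnmap_of_one_lt ha hne]
    unfold upmap
    rw [Multiset.erase_cons_tail _ (by omega : (y:ℕ) - 1 ≠ x),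
      Multiset.erase_comm, Multiset.cons_swap]

-- membership characterizations
lemma mem_upN {a b : Multiset ℕ} (ha : 0 ∉ a) : b ∈ upN a ↔ AddBox a b := by
  constructor
  · intro h
    rcases Finset.mem_image.1 h with ⟨x, hx, rfl⟩
    rw [Multiset.mem_toFinset] at hx
    rcases Multiset.mem_cons.1 hx with h0 | h0
    · subst h0
      right
      unfold upmap
      rw [Multiset.erase_of_notMem ha]
    · left
      exact ⟨x, h0, rfl⟩
  · intro h
    rcases h with ⟨x, hx, rfl⟩ | rfl
    · exact Finset.mem_image.2 ⟨x, Multiset.mem_toFinset.2 (Multiset.mem_cons_of_mem hx), rfl⟩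
    · refine Finset.mem_image.2 ⟨0, Multiset.mem_toFinset.2 (Multiset.mem_cons_self _ _), ?_⟩
      unfold upmap
      rw [Multiset.erase_of_notMem ha]

lemma mem_dnN {a b : Multiset ℕ} (ha : 0 ∉ a) : b ∈ dnN a ↔ (AddBox b a ∧ 0 ∉ b) := by
  constructor
  · intro h
    rcases Finset.mem_image.1 h with ⟨y, hy, rfl⟩
    rw [Multiset.mem_toFinset] at hy
    refine ⟨?_, nomem_zero_dnmap ha y⟩
    have hy1 : 1 ≤ y := Nat.one_le_iff_ne_zero.2 (fun h => ha (h ▸ hy))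
    by_cases h1 : y = 1
    · subst h1
      right
      rw [dnmap_one, Multiset.cons_erase hy]
    · left
      refine ⟨y - 1, ?_, ?_⟩
      · rw [dnmap_of_one_lt ha (by omega)]
        exact Multiset.mem_cons_self _ _
      · rw [dnmap_of_one_lt ha (by omega), Nat.sub_add_cancel hy1,
          Multiset.erase_cons_head, Multiset.cons_erase hy]
  · rintro ⟨h, hb⟩
    rcases h with ⟨x, hx, he⟩ | he
    · refine Finset.mem_image.2 ⟨x + 1, Multiset.mem_toFinset.2 ?_, ?_⟩
      · rw [he]; exact Multiset.mem_cons_self _ _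
      · rw [he]
        unfold dnmap
        rw [Multiset.erase_cons_head, Nat.add_sub_cancel, Multiset.cons_erase hx]
        exact Multiset.erase_of_notMem hb
    · refine Finset.mem_image.2 ⟨1, Multiset.mem_toFinset.2 ?_, ?_⟩
      · rw [he]; exact Multiset.mem_cons_self _ _
      · rw [he, dnmap_one, Multiset.erase_cons_head]

lemma nomem_zero_of_mem_upN {a b : Multiset ℕ} (ha : 0 ∉ a) (h : b ∈ upN a) : 0 ∉ b := by
  rcases Finset.mem_image.1 h with ⟨x, _, rfl⟩
  exact nomem_zero_upmap ha x

lemma nomem_zero_of_mem_dnN {a b : Multiset ℕ} (ha : 0 ∉ a) (h : b ∈ dnN a) : 0 ∉ b := by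
  rcases Finset.mem_image.1 h with ⟨y, _, rfl⟩
  exact nomem_zero_dnmap ha y

lemma sum_upmap {a : Multiset ℕ} (ha : 0 ∉ a) {x : ℕ} (hx : x ∈ 0 ::ₘ a) :
    (upmap a x).sum = a.sum + 1 := by
  unfold upmap
  rcases Multiset.mem_cons.1 hx with h | h
  · subst h; rw [Multiset.erase_of_notMem ha, Multiset.sum_cons]; omega
  · have h2 := congrArg Multiset.sum (Multiset.cons_erase h)
    rw [Multiset.sum_cons] at h2
    rw [Multiset.sum_cons]
    omega

lemma sum_dnmap {a : Multiset ℕ} (ha : 0 ∉ a) {y : ℕ} (hy : y ∈ a) :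
    (dnmap a y).sum + 1 = a.sum := by
  have hy1 : 1 ≤ y := Nat.one_le_iff_ne_zero.2 (fun h => ha (h ▸ hy))
  have hsa := congrArg Multiset.sum (Multiset.cons_erase hy)
  rw [Multiset.sum_cons] at hsa
  by_cases h1 : y = 1
  · subst h1
    rw [dnmap_one]
    omega
  · rw [dnmap_of_one_lt ha (by omega), Multiset.sum_cons]
    omega

lemma disjoint_upN_dnN {a : Multiset ℕ} (ha : 0 ∉ a) : Disjoint (upN a) (dnN a) := by
  rw [Finset.disjoint_left]
  intro b hu hd
  rcases Finset.mem_image.1 hu with ⟨x, hx, rfl⟩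
  rcases Finset.mem_image.1 hd with ⟨y, hy, he⟩
  have h1 := sum_upmap ha (Multiset.mem_toFinset.1 hx)
  have h2 := sum_dnmap ha (Multiset.mem_toFinset.1 hy)
  rw [he] at h2
  omega

lemma sum_upN {M : Type*} [AddCommMonoid M] (f : Multiset ℕ → M) (a : Multiset ℕ) :
    ∑ μ ∈ upN a, f μ = ∑ x ∈ (0 ::ₘ a).toFinset, f (upmap a x) :=
  Finset.sum_image (fun _ _ _ _ h => upmap_inj h)

lemma sum_dnN {M : Type*} [AddCommMonoid M] (f : Multiset ℕ → M) {a : Multiset ℕ}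
    (ha : 0 ∉ a) :
    ∑ μ ∈ dnN a, f μ = ∑ y ∈ a.toFinset, f (dnmap a y) :=
  Finset.sum_image (fun y hy y' hy' h =>
    dnmap_inj ha (Multiset.mem_toFinset.1 hy) (Multiset.mem_toFinset.1 hy') h)

lemma mem_erase_upmap {l : Multiset ℕ} {x y : ℕ} (hy : y ∈ upmap l x) (hxy : y ≠ x + 1) :
    y ∈ l.erase x :=
  (Multiset.mem_cons.1 hy).resolve_left hxy

lemma comm_sum {l : Multiset ℕ} (hl : 0 ∉ l) (f : Multiset ℕ → ℕ) :
    ∑ μ ∈ upN l, ∑ ν ∈ dnN μ, f ν = f l + ∑ μ ∈ dnN l, ∑ ν ∈ upN μ, f ν := by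
  rw [sum_upN (fun μ => ∑ ν ∈ dnN μ, f ν) l, sum_dnN (fun μ => ∑ ν ∈ upN μ, f ν) hl]
  have hup : ∀ x ∈ (0 ::ₘ l).toFinset,
      ∑ ν ∈ dnN (upmap l x), f ν
        = ∑ y ∈ (upmap l x).toFinset.erase (x + 1), f (dnmap (upmap l x) y) + f l := by
    intro x hx
    rw [Multiset.mem_toFinset] at hx
    rw [sum_dnN f (nomem_zero_upmap hl x)]
    have hmem : x + 1 ∈ (upmap l x).toFinset :=
      Multiset.mem_toFinset.2 (by unfold upmap; exact Multiset.mem_cons_self _ _)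
    rw [← Finset.sum_erase_add _ _ hmem, dnmap_upmap_self hl hx]
  have hdn : ∀ y ∈ l.toFinset,
      ∑ ν ∈ upN (dnmap l y), f ν
        = ∑ x ∈ (0 ::ₘ dnmap l y).toFinset.erase (y - 1), f (upmap (dnmap l y) x) + f l := by
    intro y hy
    rw [Multiset.mem_toFinset] at hy
    rw [sum_upN f (dnmap l y)]
    rw [← Finset.sum_erase_add _ _ (Multiset.mem_toFinset.2 (mem_cons_self_of_mem hy))]
    rw [upmap_dnmap_self hl hy]
  rw [Finset.sum_congr rfl hup, Finset.sum_congr rfl hdn]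
  rw [Finset.sum_add_distrib, Finset.sum_add_distrib, Finset.sum_const, Finset.sum_const]
  have hcard : (0 ::ₘ l).toFinset.card = l.toFinset.card + 1 := by
    rw [Multiset.toFinset_cons, Finset.card_insert_of_notMem (by
      rw [Multiset.mem_toFinset]; exact hl)]
  have hmain :
      ∑ x ∈ (0 ::ₘ l).toFinset, ∑ y ∈ (upmap l x).toFinset.erase (x + 1),
        f (dnmap (upmap l x) y)
      = ∑ y ∈ l.toFinset, ∑ x ∈ (0 ::ₘ dnmap l y).toFinset.erase (y - 1),
        f (upmap (dnmap l y) x) := by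
    rw [Finset.sum_sigma' ((0 ::ₘ l).toFinset) (fun x => (upmap l x).toFinset.erase (x + 1))
      (fun x y => f (dnmap (upmap l x) y))]
    rw [Finset.sum_sigma' (l.toFinset) (fun y => (0 ::ₘ dnmap l y).toFinset.erase (y - 1))
      (fun y x => f (upmap (dnmap l y) x))]
    refine Finset.sum_nbij' (fun p => ⟨p.2, p.1⟩) (fun p => ⟨p.2, p.1⟩) ?_ ?_
      (fun _ _ => rfl) (fun _ _ => rfl) ?_
    · rintro ⟨x, y⟩ hp
      rw [Finset.mem_sigma] at hp ⊢
      dsimp only at hp ⊢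
      obtain ⟨hx, hy⟩ := hp
      rw [Multiset.mem_toFinset] at hx
      rw [Finset.mem_erase, Multiset.mem_toFinset] at hy
      obtain ⟨hyne, hymem⟩ := hy
      have hyel : y ∈ l.erase x := mem_erase_upmap hymem hyne
      have hyl : y ∈ l := Multiset.mem_of_mem_erase hyel
      have hy1 : 1 ≤ y := Nat.one_le_iff_ne_zero.2 (fun h => hl (h ▸ hyl))
      refine ⟨Multiset.mem_toFinset.2 hyl, ?_⟩
      rw [Finset.mem_erase, Multiset.mem_toFinset]
      refine ⟨by omega, ?_⟩
      rcases Multiset.mem_cons.1 hx with h0 | h0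
      · subst h0; exact Multiset.mem_cons_self _ _
      · apply Multiset.mem_cons_of_mem
        have hx0 : x ≠ 0 := fun h => hl (h ▸ h0)
        unfold dnmap
        rw [Multiset.mem_erase_of_ne hx0]
        apply Multiset.mem_cons_of_mem
        by_cases hxy : x = y
        · subst hxy; exact hyel
        · exact (Multiset.mem_erase_of_ne hxy).2 h0
    · rintro ⟨y, x⟩ hp
      rw [Finset.mem_sigma] at hp ⊢
      dsimp only at hp ⊢
      obtain ⟨hy, hx⟩ := hp
      rw [Multiset.mem_toFinset] at hy
      rw [Finset.mem_erase, Multiset.mem_toFinset] at hx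
      obtain ⟨hxne, hxmem⟩ := hx
      have hy1 : 1 ≤ y := Nat.one_le_iff_ne_zero.2 (fun h => hl (h ▸ hy))
      have hxl : x ∈ 0 ::ₘ l := by
        rcases Multiset.mem_cons.1 hxmem with h0 | h0
        · subst h0; exact Multiset.mem_cons_self _ _
        · apply Multiset.mem_cons_of_mem
          have hx0 : x ≠ 0 := by
            intro h; subst h
            exact nomem_zero_dnmap hl y h0
          have h1 : x ∈ (y - 1) ::ₘ l.erase y := by
            unfold dnmap at h0
            exact Multiset.mem_of_mem_erase h0
          have h2 : x ∈ l.erase y := (Multiset.mem_cons.1 h1).resolve_left hxne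
          exact Multiset.mem_of_mem_erase h2
      refine ⟨Multiset.mem_toFinset.2 hxl, ?_⟩
      rw [Finset.mem_erase, Multiset.mem_toFinset]
      refine ⟨by omega, ?_⟩
      unfold upmap
      apply Multiset.mem_cons_of_mem
      by_cases hxy : y = x
      · subst hxy
        have hx0 : y ≠ 0 := by omega
        rcases Multiset.mem_cons.1 hxmem with h0 | h0
        · omega
        · have h1 : y ∈ (y - 1) ::ₘ l.erase y := by
            unfold dnmap at h0
            exact Multiset.mem_of_mem_erase h0
          exact (Multiset.mem_cons.1 h1).resolve_left hxne
      · exact (Multiset.mem_erase_of_ne hxy).2 hy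
    · rintro ⟨x, y⟩ hp
      rw [Finset.mem_sigma] at hp
      obtain ⟨hx, hy⟩ := hp
      rw [Finset.mem_erase, Multiset.mem_toFinset] at hy
      obtain ⟨hyne, hymem⟩ := hy
      have hyl : y ∈ l := Multiset.mem_of_mem_erase (mem_erase_upmap hymem hyne)
      simp only
      rw [swap_identity hl hyl hyne]
  rw [hmain, hcard]
  ring

def v : ℕ → Multiset ℕ → ℕ
  | 0, l => if l = 0 then 1 else 0
  | (k+1), l => (∑ μ ∈ upN l, v k μ) + ∑ μ ∈ dnN l, v k μ

lemma sum_upN_v0 (l : Multiset ℕ) : ∑ μ ∈ upN l, v 0 μ = 0 := by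
  apply Finset.sum_eq_zero
  intro μ hμ
  rcases Finset.mem_image.1 hμ with ⟨x, _, rfl⟩
  unfold v upmap
  rw [if_neg (Multiset.cons_ne_zero)]

lemma Dsucc : ∀ k, ∀ l : Multiset ℕ, 0 ∉ l →
    ∑ μ ∈ upN l, v (k + 1) μ = (k + 1) * v k l := by
  intro k
  induction k with
  | zero =>
    intro l hl
    show ∑ μ ∈ upN l, v 1 μ = 1 * v 0 l
    have h1 : ∀ μ ∈ upN l, v 1 μ = ∑ ν ∈ dnN μ, v 0 ν := by
      intro μ hμ
      show (∑ ν ∈ upN μ, v 0 ν) + ∑ ν ∈ dnN μ, v 0 ν = _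
      rw [sum_upN_v0, zero_add]
    rw [Finset.sum_congr rfl h1, comm_sum hl (v 0)]
    have h2 : ∑ μ ∈ dnN l, ∑ ν ∈ upN μ, v 0 ν = 0 :=
      Finset.sum_eq_zero (fun μ _ => sum_upN_v0 μ)
    rw [h2]
    ring
  | succ k IH =>
    intro l hl
    have h1 : ∀ μ ∈ upN l, v (k + 2) μ
        = (k + 1) * v k μ + ∑ ν ∈ dnN μ, v (k + 1) ν := by
      intro μ hμ
      show (∑ ν ∈ upN μ, v (k+1) ν) + ∑ ν ∈ dnN μ, v (k+1) ν = _
      rw [IH μ (nomem_zero_of_mem_upN hl hμ)]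
    rw [Finset.sum_congr rfl h1, Finset.sum_add_distrib]
    rw [comm_sum hl (v (k + 1))]
    have h2 : ∀ μ ∈ dnN l, ∑ ν ∈ upN μ, v (k + 1) ν = (k + 1) * v k μ := by
      intro μ hμ
      exact IH μ (nomem_zero_of_mem_dnN hl hμ)
    rw [Finset.sum_congr rfl h2]
    rw [← Finset.mul_sum, ← Finset.mul_sum]
    have h3 : v (k + 1) l = (∑ μ ∈ upN l, v k μ) + ∑ μ ∈ dnN l, v k μ := rfl
    rw [h3]
    ring

lemma dnN_zero : dnN 0 = ∅ := by
  unfold dnN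
  simp

lemma v_step_zero (k : ℕ) : v (k + 2) 0 = (k + 1) * v k 0 := by
  show (∑ μ ∈ upN 0, v (k + 1) μ) + ∑ μ ∈ dnN 0, v (k + 1) μ = _
  rw [dnN_zero, Finset.sum_empty, add_zero, Dsucc k 0 (Multiset.notMem_zero 0)]

lemma df_odd (n : ℕ) :
    Nat.doubleFactorial (2 * n + 1) = (2 * n + 1) * Nat.doubleFactorial (2 * n - 1) := by
  cases n with
  | zero => rfl
  | succ n =>
    have h1 : 2 * (n + 1) + 1 = (2 * n + 1) + 2 := by ring
    have h2 : 2 * (n + 1) - 1 = 2 * n + 1 := by omega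
    rw [h1, h2, Nat.doubleFactorial]

lemma v_two_mul (n : ℕ) : v (2 * n) 0 = Nat.doubleFactorial (2 * n - 1) := by
  induction n with
  | zero => rfl
  | succ n IH =>
    have h1 : 2 * (n + 1) = 2 * n + 2 := by ring
    rw [h1, v_step_zero (2 * n), IH]
    have h2 : 2 * n + 2 - 1 = 2 * n + 1 := by omega
    rw [h2, df_odd]

def Walks (k : ℕ) (l : Multiset ℕ) : Type :=
  {P : Fin (k + 1) → Multiset ℕ //
    (∀ i, ∀ x ∈ P i, 0 < x) ∧
    (∀ i : Fin k, AddBox (P i.castSucc) (P i.succ) ∨ AddBox (P i.succ) (P i.castSucc)) ∧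
    P 0 = 0 ∧ P (Fin.last k) = l}

lemma nomem_zero_of_pos {a : Multiset ℕ} (h : ∀ x ∈ a, 0 < x) : 0 ∉ a :=
  fun hc => lt_irrefl 0 (h 0 hc)

lemma pos_of_nomem_zero {a : Multiset ℕ} (h : 0 ∉ a) : ∀ x ∈ a, 0 < x :=
  fun x hx => Nat.pos_of_ne_zero (fun e => h (e ▸ hx))

instance walks_zero_subsingleton (l : Multiset ℕ) : Subsingleton (Walks 0 l) := by
  constructor
  intro A B
  apply Subtype.ext
  funext i
  have hi : i = 0 := by omega
  rw [hi, A.2.2.2.1, B.2.2.2.1]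

lemma card_walks_zero (l : Multiset ℕ) : Nat.card (Walks 0 l) = v 0 l := by
  by_cases hl : l = 0
  · subst hl
    have : Nat.card (Walks 0 0) = 1 := by
      haveI : Nonempty (Walks 0 (0 : Multiset ℕ)) :=
        ⟨⟨fun _ => 0, fun i x hx => absurd hx (Multiset.notMem_zero x),
          fun i => i.elim0, rfl, rfl⟩⟩
      haveI : Unique (Walks 0 (0 : Multiset ℕ)) :=
        uniqueOfSubsingleton (Classical.arbitrary _)
      exact Nat.card_unique
    rw [this]; rfl
  · haveI : IsEmpty (Walks 0 l) := by
      constructor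
      rintro ⟨P, _, _, hP0, hPl⟩
      apply hl
      rw [← hPl]
      have : Fin.last 0 = 0 := rfl
      rw [this, hP0]
    rw [Nat.card_of_isEmpty]
    unfold v
    rw [if_neg hl]

def extendWalk (k : ℕ) (l : Multiset ℕ) (hl : 0 ∉ l)
    (p : Σ μ : {μ : Multiset ℕ // μ ∈ upN l ∪ dnN l}, Walks k μ.1) : Walks (k + 1) l := by
  refine ⟨Fin.snoc p.2.1 l, ?_, ?_, ?_, ?_⟩
  · intro i
    refine Fin.lastCases ?_ ?_ i
    · rw [Fin.snoc_last]
      exact pos_of_nomem_zero hl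
    · intro j
      rw [Fin.snoc_castSucc]
      exact p.2.2.1 j
  · intro i
    refine Fin.lastCases ?_ ?_ i
    · have h1 : (Fin.last k).succ = Fin.last (k + 1) := Fin.succ_last k
      rw [h1, Fin.snoc_last, Fin.snoc_castSucc]
      rw [p.2.2.2.2.2]
      rcases Finset.mem_union.1 p.1.2 with h | h
      · exact Or.inr ((mem_upN hl).1 h)
      · exact Or.inl (((mem_dnN hl).1 h).1)
    · intro j
      have h1 : (j.castSucc).castSucc = (j.castSucc).castSucc := rfl
      have h2 : (j.castSucc).succ = (j.succ).castSucc := Fin.succ_castSucc j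
      rw [h2, Fin.snoc_castSucc, Fin.snoc_castSucc]
      exact p.2.2.2.1 j
  · have h0 : (0 : Fin (k + 2)) = (0 : Fin (k + 1)).castSucc := (Fin.castSucc_zero).symm
    rw [h0, Fin.snoc_castSucc]
    exact p.2.2.2.2.1
  · rw [Fin.snoc_last]

lemma extendWalk_bijective (k : ℕ) (l : Multiset ℕ) (hl : 0 ∉ l) :
    Function.Bijective (extendWalk k l hl) := by
  constructor
  · rintro ⟨a, Q, hQ⟩ ⟨a', Q', hQ'⟩ h
    have hv := congrArg Subtype.val h
    simp only [extendWalk] at hv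
    have hQQ : Q = Q' := by
      funext i
      have h2 := congrFun hv i.castSucc
      rwa [Fin.snoc_castSucc, Fin.snoc_castSucc] at h2
    have haa : a = a' := Subtype.ext (by rw [← hQ.2.2.2, ← hQ'.2.2.2, hQQ])
    subst haa
    exact congrArg (Sigma.mk a) (Subtype.ext hQQ)
  · rintro ⟨P, hpos, hstep, h0, hlast⟩
    have hμmem : P ((Fin.last k).castSucc) ∈ upN l ∪ dnN l := by
      have hs := hstep (Fin.last k)
      rw [Fin.succ_last, hlast] at hs
      have hμ0 : 0 ∉ P ((Fin.last k).castSucc) :=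
        nomem_zero_of_pos (hpos _)
      rcases hs with h | h
      · exact Finset.mem_union_right _ ((mem_dnN hl).2 ⟨h, hμ0⟩)
      · exact Finset.mem_union_left _ ((mem_upN hl).2 h)
    refine ⟨⟨⟨P ((Fin.last k).castSucc), hμmem⟩,
      ⟨fun i => P i.castSucc, ?_, ?_, ?_, rfl⟩⟩, ?_⟩
    · intro i; exact hpos i.castSucc
    · intro i
      have hs := hstep i.castSucc
      rwa [Fin.succ_castSucc] at hs
    · show P ((0 : Fin (k + 1)).castSucc) = 0
      rw [Fin.castSucc_zero]; exact h0
    · apply Subtype.ext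
      simp only [extendWalk]
      funext i
      refine Fin.lastCases ?_ ?_ i
      · rw [Fin.snoc_last, hlast]
      · intro j
        rw [Fin.snoc_castSucc]

lemma walks_finite_card : ∀ k, ∀ l : Multiset ℕ, 0 ∉ l →
    Finite (Walks k l) ∧ Nat.card (Walks k l) = v k l := by
  intro k
  induction k with
  | zero =>
    intro l _
    exact ⟨Finite.of_subsingleton, card_walks_zero l⟩
  | succ k IH =>
    intro l hl
    haveI hfib : ∀ μ : {μ : Multiset ℕ // μ ∈ upN l ∪ dnN l}, Finite (Walks k μ.1) := by
      rintro ⟨μ, hμ⟩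
      rcases Finset.mem_union.1 hμ with h | h
      · exact (IH μ (nomem_zero_of_mem_upN hl h)).1
      · exact (IH μ (nomem_zero_of_mem_dnN hl h)).1
    haveI : Finite (Σ μ : {μ : Multiset ℕ // μ ∈ upN l ∪ dnN l}, Walks k μ.1) :=
      inferInstance
    have hcard := Nat.card_eq_of_bijective _ (extendWalk_bijective k l hl)
    constructor
    · exact Finite.of_surjective _ (extendWalk_bijective k l hl).2
    · rw [← hcard]
      haveI hft : ∀ μ : {μ : Multiset ℕ // μ ∈ upN l ∪ dnN l}, Fintype (Walks k μ.1) :=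
        fun μ => Fintype.ofFinite _
      rw [Nat.card_eq_fintype_card, Fintype.card_sigma]
      have h1 : ∀ μ : {μ : Multiset ℕ // μ ∈ upN l ∪ dnN l},
          Fintype.card (Walks k μ.1) = v k μ.1 := by
        rintro ⟨μ, hμ⟩
        rw [← Nat.card_eq_fintype_card]
        rcases Finset.mem_union.1 hμ with h | h
        · exact (IH μ (nomem_zero_of_mem_upN hl h)).2
        · exact (IH μ (nomem_zero_of_mem_dnN hl h)).2
      rw [Finset.sum_congr rfl (fun μ _ => h1 μ)]
      rw [Finset.sum_coe_sort (upN l ∪ dnN l) (v k)]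
      rw [Finset.sum_union (disjoint_upN_dnN hl)]
      rfl

end YW

/-- The number of walks of length `2n` in Young's lattice starting and ending at
the empty partition equals `(2n-1)!!` (with `(-1)!! = 1`). -/
theorem stmt_7 (n : ℕ) :
    Nat.card {P : Fin (2 * n + 1) → Multiset ℕ //
      YoungWalk n P ∧ P 0 = 0 ∧ P (Fin.last (2 * n)) = 0} =
    Nat.doubleFactorial (2 * n - 1) := by
  have he : {P : Fin (2 * n + 1) → Multiset ℕ //
      YoungWalk n P ∧ P 0 = 0 ∧ P (Fin.last (2 * n)) = 0} ≃ YW.Walks (2 * n) 0 := by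
    apply Equiv.subtypeEquivRight
    intro P
    unfold YoungWalk
    tauto
  rw [Nat.card_congr he,
    (YW.walks_finite_card (2 * n) 0 (Multiset.notMem_zero 0)).2, YW.v_two_mul]
end

section
/- In the game of plates and olives, the number p_c^-(g) of complex plate-remove moves in any game g is at most the number v_f^+(g) of first olive-add moves in g. -/
/-- A plate-add move: an empty plate (a `0`) is put down. -/
def PPlus (a b : Multiset ℕ) : Prop := b = 0 ::ₘ a

/-- A first olive-add move: an olive is put down on an empty plate. -/
def OPlusF (a b : Multiset ℕ) : Prop := (0 : ℕ) ∈ a ∧ b = 1 ::ₘ a.erase 0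

/-- A later olive-add move: an olive is put down on a plate already holding olives. -/
def OPlusL (a b : Multiset ℕ) : Prop := ∃ x ∈ a, 0 < x ∧ b = (x + 1) ::ₘ a.erase x

/-- An olive-add move (first or later). -/
def OPlus (a b : Multiset ℕ) : Prop := OPlusF a b ∨ OPlusL a b

/-- An olive-remove move: an olive is removed from a nonempty plate. -/
def OMinus (a b : Multiset ℕ) : Prop := ∃ x ∈ a, 0 < x ∧ b = (x - 1) ::ₘ a.erase x

/-- A simple plate-remove move: an empty plate is removed. -/
def PMinusS (a b : Multiset ℕ) : Prop := a = 0 ::ₘ b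

/-- A complex plate-remove move: the olives on two plates that both have olives
are combined on one of them, and the other plate is removed. -/
def PMinusC (a b : Multiset ℕ) : Prop :=
  ∃ x ∈ a, ∃ y ∈ a.erase x, 0 < x ∧ 0 < y ∧ b = (x + y) ::ₘ (a.erase x).erase y

/-- A legal move of the game of plates and olives. -/
def Step (a b : Multiset ℕ) : Prop :=
  PPlus a b ∨ OPlus a b ∨ OMinus a b ∨ PMinusS a b ∨ PMinusC a b

/-- A game of plates and olives of length `n`: a sequence of `2n+3`
configurations (multisets recording the number of olives on each plate),
starting and ending at the empty table, linked by `2n+2` legal moves, with no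
intermediate return to the empty table. -/
def IsGame (n : ℕ) (P : Fin (2 * n + 2 + 1) → Multiset ℕ) : Prop :=
  P 0 = 0 ∧ P (Fin.last (2 * n + 2)) = 0 ∧
  (∀ i : Fin (2 * n + 2), Step (P i.castSucc) (P i.succ)) ∧
  (∀ i : Fin (2 * n + 2 + 1), i ≠ 0 → i ≠ Fin.last (2 * n + 2) → P i ≠ 0)

/-- `M n` is the number of games of plates and olives of length `n`. -/
noncomputable def M (n : ℕ) : ℕ := Nat.card {P : Fin (2 * n + 2 + 1) → Multiset ℕ // IsGame n P}

/-- Number of plates holding at least one olive. -/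
def fpos (a : Multiset ℕ) : ℕ := (a.filter (fun x => 0 < x)).card

lemma fpos_cons (x : ℕ) (s : Multiset ℕ) :
    fpos (x ::ₘ s) = fpos s + (if 0 < x then 1 else 0) := by
  simp only [fpos, Multiset.filter_cons]
  split <;> simp [add_comm]

lemma fpos_erase {x : ℕ} {a : Multiset ℕ} (hx : x ∈ a) :
    fpos a = fpos (a.erase x) + (if 0 < x then 1 else 0) := by
  conv_lhs => rw [← Multiset.cons_erase hx]
  rw [fpos_cons]

lemma fpos_of_OPlusF {a b : Multiset ℕ} (h : OPlusF a b) : fpos b = fpos a + 1 := by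
  obtain ⟨h0, hb⟩ := h
  rw [hb, fpos_cons, fpos_erase h0]
  simp

lemma fpos_of_PMinusC {a b : Multiset ℕ} (h : PMinusC a b) : fpos a = fpos b + 1 := by
  obtain ⟨x, hx, y, hy, hx0, hy0, hb⟩ := h
  rw [hb, fpos_cons, fpos_erase hx, fpos_erase hy]
  simp [hx0, hy0, Nat.add_pos_left hx0]

lemma fpos_step {a b : Multiset ℕ} (h : Step a b) (hF : ¬ OPlusF a b) : fpos b ≤ fpos a := by
  rcases h with h | (h | h) | h | h | h
  · rw [h, fpos_cons]; simp
  · exact absurd h hF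
  · obtain ⟨x, hx, hx0, hb⟩ := h
    rw [hb, fpos_cons, fpos_erase hx]
    simp [hx0]
  · obtain ⟨x, hx, hx0, hb⟩ := h
    rw [hb, fpos_cons, fpos_erase hx]
    split <;> simp [hx0]
  · rw [h, fpos_cons]; simp
  · have := fpos_of_PMinusC h; omega

open scoped Classical in
lemma step_bound {a b : Multiset ℕ} (h : Step a b) :
    (fpos b : ℤ) - fpos a ≤
      (if OPlusF a b then 1 else 0) - (if PMinusC a b then 1 else 0) := by
  split_ifs with hF hC hC
  · have h1 := fpos_of_OPlusF hF
    have h2 := fpos_of_PMinusC hC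
    omega
  · have h1 := fpos_of_OPlusF hF
    omega
  · have h2 := fpos_of_PMinusC hC
    omega
  · have := fpos_step h hF
    omega

/-- In any game of plates and olives, the number of complex plate-remove moves
is at most the number of first olive-add moves. -/
theorem stmt_8 (n : ℕ) (P : Fin (2 * n + 2 + 1) → Multiset ℕ) (hP : IsGame n P) :
    Nat.card {i : Fin (2 * n + 2) // PMinusC (P i.castSucc) (P i.succ)} ≤
      Nat.card {i : Fin (2 * n + 2) // OPlusF (P i.castSucc) (P i.succ)} := by
  classical
  obtain ⟨h0, hlast, hstep, -⟩ := hP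
  set G : ℕ → ℤ := fun k => if h : k < 2 * n + 2 + 1 then (fpos (P ⟨k, h⟩) : ℤ) else 0
    with hGdef
  have hG : ∀ i : Fin (2 * n + 2), G (i.1 + 1) - G i.1
      = (fpos (P i.succ) : ℤ) - fpos (P i.castSucc) := by
    intro i
    have h1 : i.1 + 1 < 2 * n + 2 + 1 := Nat.succ_lt_succ i.2
    have h2 : i.1 < 2 * n + 2 + 1 := Nat.lt_succ_of_lt i.2
    simp only [hGdef, dif_pos h1, dif_pos h2]
    rfl
  have tele : ∑ i : Fin (2 * n + 2),
      ((fpos (P i.succ) : ℤ) - fpos (P i.castSucc)) = 0 := by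
    calc ∑ i : Fin (2 * n + 2), ((fpos (P i.succ) : ℤ) - fpos (P i.castSucc))
        = ∑ i : Fin (2 * n + 2), (G (i.1 + 1) - G i.1) :=
          Finset.sum_congr rfl (fun i _ => (hG i).symm)
      _ = ∑ k ∈ Finset.range (2 * n + 2), (G (k + 1) - G k) :=
          Fin.sum_univ_eq_sum_range (fun k => G (k + 1) - G k) (2 * n + 2)
      _ = G (2 * n + 2) - G 0 := Finset.sum_range_sub G (2 * n + 2)
      _ = 0 := by
          have hNlt : 2 * n + 2 < 2 * n + 2 + 1 := Nat.lt_succ_self _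
          have h0lt : 0 < 2 * n + 2 + 1 := Nat.succ_pos _
          simp only [hGdef, dif_pos hNlt, dif_pos h0lt]
          have e1 : (⟨2 * n + 2, hNlt⟩ : Fin (2 * n + 2 + 1)) = Fin.last (2 * n + 2) := rfl
          have e2 : (⟨0, h0lt⟩ : Fin (2 * n + 2 + 1)) = 0 := rfl
          rw [e1, e2, h0, hlast]
          simp [fpos]
  have hsum : (0 : ℤ) ≤ ∑ i : Fin (2 * n + 2),
      ((if OPlusF (P i.castSucc) (P i.succ) then (1 : ℤ) else 0)
        - (if PMinusC (P i.castSucc) (P i.succ) then (1 : ℤ) else 0)) := by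
    have h := Finset.sum_le_sum (s := Finset.univ)
      (fun (i : Fin (2 * n + 2)) _ => step_bound (hstep i))
    rw [tele] at h
    exact h
  rw [Finset.sum_sub_distrib, Finset.sum_boole, Finset.sum_boole] at hsum
  have hc1 : Nat.card {i : Fin (2 * n + 2) // PMinusC (P i.castSucc) (P i.succ)}
      = (Finset.univ.filter fun i : Fin (2 * n + 2) =>
          PMinusC (P i.castSucc) (P i.succ)).card := by
    rw [Nat.card_eq_fintype_card, Fintype.card_subtype]
  have hc2 : Nat.card {i : Fin (2 * n + 2) // OPlusF (P i.castSucc) (P i.succ)}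
      = (Finset.univ.filter fun i : Fin (2 * n + 2) =>
          OPlusF (P i.castSucc) (P i.succ)).card := by
    rw [Nat.card_eq_fintype_card, Fintype.card_subtype]
  rw [hc1, hc2]
  exact_mod_cast sub_nonneg.mp hsum
end

section
/- The number M_n of games of plates and olives of length n satisfies M_n ≥ (2n-1)!!. -/
/-!
Encode a partition by the multiset of its row lengths minus one, i.e. by the olive counts of a
table with one plate per row. Adding a box is then a `P+` or `O+` move and removing one an `O-`
or simple `P-` move, so a walk `∅ → ∅` of length `2n` in Young's lattice, played on a table
with one extra empty plate that is put down first and taken away last, is a game of length `n`;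
the extra plate keeps the table nonempty in between.

Walks in Young's lattice are counted by the commutation relation `DU ≥ UD + I` between its down
and up operators. It gives `(m + 1) g_m(s) ≤ ∑_{t ⋗ s} g_{m+1}(t)` for the numbers `g_m(s)` of
walks of length `m` from `s` to `∅`. Since `∅` covers nothing, at `s = ∅` the right-hand side
is `g_{m+2}(∅)`, whence `g_{2n}(∅) ≥ (2n - 1)!!`.
-/

open Finset
open scoped Nat

section UpDown

variable {α : Type*} [DecidableEq α]

/-- Stanley's `1`-differential condition `DU - UD = I` on the up and down covers of a graded
poset, relaxed to an inequality. -/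
structure IsDifferentialLE (up down : α → Finset α) : Prop where
  mem_up_iff_mem_down : ∀ s t, t ∈ up s ↔ s ∈ down t
  card_down_inter_add_le : ∀ s t, #(down s ∩ down t) + (if s = t then 1 else 0) ≤ #(up s ∩ up t)

theorem sum_sum_eq_sum_card_inter_mul {f g : α → Finset α} (hfg : ∀ r t, t ∈ f r ↔ r ∈ g t)
    {A U : Finset α} (hU : ∀ r ∈ A, f r ⊆ U) (v : α → ℕ) :
    ∑ r ∈ A, ∑ t ∈ f r, v t = ∑ t ∈ U, #(A ∩ g t) * v t := by
  rw [sum_comm' (t' := U) (s' := fun t => A ∩ g t)]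
  · simp only [sum_const, smul_eq_mul]
  · intro r t
    rw [mem_inter, hfg]
    exact ⟨fun ⟨hr, ht⟩ => ⟨⟨hr, ht⟩, hU r hr ((hfg r t).2 ht)⟩, fun ⟨h, _⟩ => h⟩

variable {up down : α → Finset α}

theorem IsDifferentialLE.sum_down_sum_up_add_le (h : IsDifferentialLE up down) (v : α → ℕ)
    (s : α) : ∑ r ∈ down s, ∑ t ∈ up r, v t + v s ≤ ∑ t ∈ up s, ∑ r ∈ down t, v r := by
  set U := insert s ((down s).biUnion up ∪ (up s).biUnion down)
  have hdown : ∀ r ∈ down s, up r ⊆ U := fun r hr t ht =>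
    mem_insert_of_mem (mem_union_left _ (mem_biUnion.2 ⟨r, hr, ht⟩))
  have hup : ∀ t ∈ up s, down t ⊆ U := fun t ht r hr =>
    mem_insert_of_mem (mem_union_right _ (mem_biUnion.2 ⟨t, ht, hr⟩))
  have hv : v s = ∑ t ∈ U, (if s = t then 1 else 0) * v t := by simp [U]
  rw [sum_sum_eq_sum_card_inter_mul h.mem_up_iff_mem_down hdown,
    sum_sum_eq_sum_card_inter_mul (fun t r => (h.mem_up_iff_mem_down r t).symm) hup, hv,
    ← sum_add_distrib]
  exact sum_le_sum fun t _ => by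
    rw [← add_mul]
    exact Nat.mul_le_mul_right _ (h.card_down_inter_add_le s t)

theorem IsDifferentialLE.mul_le_sum_up (h : IsDifferentialLE up down) {g : ℕ → α → ℕ}
    (hg : ∀ m s, g (m + 1) s = ∑ r ∈ down s, g m r + ∑ t ∈ up s, g m t) (m : ℕ) (s : α) :
    (m + 1) * g m s ≤ ∑ t ∈ up s, g (m + 1) t := by
  induction m generalizing s with
  | zero =>
    have key := h.sum_down_sum_up_add_le (g 0) s
    rw [sum_congr rfl fun t _ => hg 0 t, sum_add_distrib]
    omega
  | succ m ih =>
    have key := h.sum_down_sum_up_add_le (g (m + 1)) s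
    have hdown : (m + 1) * ∑ r ∈ down s, g m r ≤ ∑ r ∈ down s, ∑ t ∈ up r, g (m + 1) t := by
      rw [mul_sum]
      exact sum_le_sum fun r _ => ih r
    have hup : (m + 1) * ∑ t ∈ up s, g m t ≤ ∑ t ∈ up s, ∑ t' ∈ up t, g (m + 1) t' := by
      rw [mul_sum]
      exact sum_le_sum fun t _ => ih t
    have hs := congrArg ((m + 1) * ·) (hg m s)
    simp only [mul_add] at hs
    rw [sum_congr rfl fun t _ => hg (m + 1) t, sum_add_distrib]
    linarith

theorem IsDifferentialLE.doubleFactorial_mul_le (h : IsDifferentialLE up down) {g : ℕ → α → ℕ}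
    (hg : ∀ m s, g (m + 1) s = ∑ r ∈ down s, g m r + ∑ t ∈ up s, g m t) {b : α}
    (hb : down b = ∅) (n : ℕ) : (2 * n - 1)‼ * g 0 b ≤ g (2 * n) b := by
  induction n with
  | zero => simp
  | succ n ih =>
    calc (2 * (n + 1) - 1)‼ * g 0 b = (2 * n + 1) * ((2 * n - 1)‼ * g 0 b) := by
          rw [show 2 * (n + 1) - 1 = 2 * n + 1 by omega, Nat.doubleFactorial_add_one, mul_assoc]
      _ ≤ (2 * n + 1) * g (2 * n) b := Nat.mul_le_mul_left _ ih
      _ ≤ ∑ t ∈ up b, g (2 * n + 1) t := h.mul_le_sum_up hg _ b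
      _ = g (2 * n + 1 + 1) b := by rw [hg, hb, sum_empty, zero_add]

end UpDown

theorem SimpleGraph.card_finsetWalkLength_succ {V : Type*} (G : SimpleGraph V) [DecidableEq V]
    [G.LocallyFinite] (n : ℕ) (u v : V) :
    #(G.finsetWalkLength (n + 1) u v) = ∑ w ∈ G.neighborFinset u, #(G.finsetWalkLength n w v) := by
  rw [finsetWalkLength, card_biUnion]
  · simp only [card_map]
    exact (sum_subtype _ (fun w => G.mem_neighborFinset u w)
      (fun w => #(G.finsetWalkLength n w v))).symm
  · rintro ⟨x, hx⟩ - ⟨y, hy⟩ - hxy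
    rw [Function.onFun, disjoint_iff_inf_le]
    intro p hp
    simp only [inf_eq_inter, mem_inter, mem_map] at hp
    obtain ⟨⟨px, _, rfl⟩, ⟨py, hpy, hp⟩⟩ := hp
    cases hp
    simp at hxy

def weight (s : Multiset ℕ) : ℕ := Multiset.card s + s.sum

theorem weight_cons (a : ℕ) (s : Multiset ℕ) : weight (a ::ₘ s) = weight s + a + 1 := by
  simp only [weight, Multiset.card_cons, Multiset.sum_cons]
  ring

theorem weight_erase {a : ℕ} {s : Multiset ℕ} (h : a ∈ s) :
    weight s = weight (s.erase a) + a + 1 := by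
  conv_lhs => rw [← Multiset.cons_erase h]
  exact weight_cons a _

namespace YoungLattice

/-- `addCell (k + 1)` lengthens a row with `k` olives; `addCell 0` starts a new row. -/
def addCell : ℕ → Multiset ℕ → Multiset ℕ
  | 0, r => 0 ::ₘ r
  | k + 1, r => (k + 1) ::ₘ r.erase k

def CanAddCell (i : ℕ) (r : Multiset ℕ) : Prop := ∀ k, i = k + 1 → k ∈ r

theorem canAddCell_zero (r : Multiset ℕ) : CanAddCell 0 r := by
  intro k h
  omega

theorem canAddCell_succ {k : ℕ} {r : Multiset ℕ} : CanAddCell (k + 1) r ↔ k ∈ r :=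
  ⟨fun h => h k rfl, fun h _ hj => Nat.succ_injective hj ▸ h⟩

theorem count_addCell {i : ℕ} {r : Multiset ℕ} (h : CanAddCell i r) (v : ℕ) :
    (addCell i r).count v + (if i = v + 1 then 1 else 0) =
      r.count v + (if v = i then 1 else 0) := by
  match i with
  | 0 => simp [addCell, Multiset.count_cons]
  | k + 1 =>
    have hk : 1 ≤ r.count k := Multiset.one_le_count_iff_mem.2 (canAddCell_succ.1 h)
    simp only [addCell, Multiset.count_cons]
    rcases eq_or_ne v k with rfl | hne
    · rw [Multiset.count_erase_self]
      split_ifs <;> omega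
    · rw [Multiset.count_erase_of_ne hne]
      split_ifs <;> omega

theorem weight_addCell {i : ℕ} {r : Multiset ℕ} (h : CanAddCell i r) :
    weight (addCell i r) = weight r + 1 := by
  match i with
  | 0 => exact weight_cons 0 r
  | k + 1 =>
    rw [addCell, weight_cons, weight_erase (canAddCell_succ.1 h)]
    ring

theorem addCell_left_injective {i j : ℕ} {s : Multiset ℕ} (hi : CanAddCell i s)
    (hj : CanAddCell j s) (h : addCell i s = addCell j s) : i = j := by
  have h1 := count_addCell hi i
  have h2 := count_addCell hj i
  rw [h] at h1
  split_ifs at h1 h2 <;> omega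

theorem canAddCell_addCell {i j : ℕ} {r : Multiset ℕ} (hi : CanAddCell i r)
    (hj : CanAddCell j r) (hij : i ≠ j) : CanAddCell j (addCell i r) := by
  intro k hk
  have hr := Multiset.one_le_count_iff_mem.2 (hj k hk)
  have hc := count_addCell hi k
  rw [← Multiset.one_le_count_iff_mem]
  split_ifs at hc <;> omega

theorem le_addCell_add_addCell {i j : ℕ} {r : Multiset ℕ} (hi : CanAddCell i r)
    (hj : CanAddCell j r) (hij : i ≠ j) : r ≤ addCell i r + addCell j r := by
  rw [Multiset.le_iff_count]
  intro v
  have h1 := count_addCell hi v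
  have h2 := count_addCell hj v
  rw [Multiset.count_add]
  split_ifs at h1 h2 <;> omega

theorem addCell_add_addCell_sub {i j : ℕ} {r : Multiset ℕ} (hi : CanAddCell i r)
    (hj : CanAddCell j r) (hij : i ≠ j) :
    addCell i r + addCell j r - r = addCell j (addCell i r) := by
  ext v
  have h1 := count_addCell hi v
  have h2 := count_addCell hj v
  have h3 := count_addCell (canAddCell_addCell hi hj hij) v
  rw [Multiset.count_sub, Multiset.count_add]
  split_ifs at h1 h2 h3 <;> omega

def addableCells (s : Multiset ℕ) : Finset ℕ := insert 0 (s.toFinset.image (· + 1))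

theorem mem_addableCells {i : ℕ} {s : Multiset ℕ} : i ∈ addableCells s ↔ CanAddCell i s := by
  match i with
  | 0 => simp [addableCells, canAddCell_zero]
  | k + 1 => simp [addableCells, canAddCell_succ]

def up (s : Multiset ℕ) : Finset (Multiset ℕ) := (addableCells s).image (addCell · s)

def down (s : Multiset ℕ) : Finset (Multiset ℕ) :=
  s.toFinset.image fun v => if v = 0 then s.erase 0 else (v - 1) ::ₘ s.erase v

theorem mem_up {s t : Multiset ℕ} : t ∈ up s ↔ ∃ i, CanAddCell i s ∧ t = addCell i s := by
  simp only [up, mem_image, mem_addableCells, eq_comm (a := t)]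

theorem mem_down {r s : Multiset ℕ} : r ∈ down s ↔ ∃ i, CanAddCell i r ∧ s = addCell i r := by
  simp only [down, mem_image, Multiset.mem_toFinset]
  constructor
  · rintro ⟨v, hv, rfl⟩
    match v with
    | 0 => exact ⟨0, canAddCell_zero _, (Multiset.cons_erase hv).symm⟩
    | k + 1 =>
      refine ⟨k + 1, canAddCell_succ.2 (Multiset.mem_cons_self _ _), ?_⟩
      simp [addCell, Multiset.cons_erase hv]
  · rintro ⟨i, hi, rfl⟩
    match i with
    | 0 => exact ⟨0, by simp [addCell], by simp [addCell]⟩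
    | k + 1 =>
      refine ⟨k + 1, by simp [addCell], ?_⟩
      simp [addCell, Multiset.cons_erase (canAddCell_succ.1 hi)]

theorem mem_up_iff_mem_down {s t : Multiset ℕ} : t ∈ up s ↔ s ∈ down t := by
  rw [mem_up, mem_down]

theorem card_up (s : Multiset ℕ) : #(up s) = #s.toFinset + 1 := by
  rw [up, card_image_of_injOn fun i hi j hj h =>
      addCell_left_injective (mem_addableCells.1 hi) (mem_addableCells.1 hj) h,
    addableCells, card_insert_of_notMem (by simp),
    card_image_of_injective _ (add_left_injective 1)]

theorem card_down_le (s : Multiset ℕ) : #(down s) ≤ #s.toFinset := card_image_le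

theorem card_down_inter_add_le (s t : Multiset ℕ) :
    #(down s ∩ down t) + (if s = t then 1 else 0) ≤ #(up s ∩ up t) := by
  rcases eq_or_ne s t with rfl | hst
  · simp only [inter_self, if_true, card_up]
    exact Nat.add_le_add_right (card_down_le s) 1
  have hcells : ∀ r ∈ down s ∩ down t, ∃ i j, CanAddCell i r ∧ CanAddCell j r ∧ i ≠ j ∧
      s = addCell i r ∧ t = addCell j r := by
    intro r hr
    obtain ⟨i, hi, rfl⟩ := mem_down.1 (mem_inter.1 hr).1
    obtain ⟨j, hj, rfl⟩ := mem_down.1 (mem_inter.1 hr).2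
    exact ⟨i, j, hi, hj, fun h => hst (h ▸ rfl), rfl, rfl⟩
  rw [if_neg hst, add_zero]
  -- a common lower cover `r` of `s ≠ t` is sent to their common upper cover `s + t - r`
  refine card_le_card_of_injOn (fun r => s + t - r) (fun r hr => ?_) fun r₁ hr₁ r₂ hr₂ h => ?_
  · obtain ⟨i, j, hi, hj, hij, rfl, rfl⟩ := hcells r hr
    refine mem_inter.2 ⟨mem_up.2 ⟨j, canAddCell_addCell hi hj hij, ?_⟩,
      mem_up.2 ⟨i, canAddCell_addCell hj hi hij.symm, ?_⟩⟩
    · exact addCell_add_addCell_sub hi hj hij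
    · rw [add_comm]
      exact addCell_add_addCell_sub hj hi hij.symm
  · have hle : ∀ r ∈ down s ∩ down t, r ≤ s + t := fun r hr => by
      obtain ⟨i, j, hi, hj, hij, rfl, rfl⟩ := hcells r hr
      exact le_addCell_add_addCell hi hj hij
    rw [← tsub_tsub_cancel_of_le (hle r₁ hr₁), ← tsub_tsub_cancel_of_le (hle r₂ hr₂)]
    exact congrArg (s + t - ·) h

theorem isDifferentialLE : IsDifferentialLE up down :=
  ⟨fun _ _ => mem_up_iff_mem_down, card_down_inter_add_le⟩

theorem disjoint_down_up (s : Multiset ℕ) : Disjoint (down s) (up s) := by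
  rw [disjoint_left]
  intro r hdown hup
  obtain ⟨i, hi, rfl⟩ := mem_down.1 hdown
  obtain ⟨j, hj, hr⟩ := mem_up.1 hup
  have := weight_addCell hj
  rw [← hr, weight_addCell hi] at this
  omega

theorem ne_of_mem_up {s t : Multiset ℕ} (h : t ∈ up s) : s ≠ t := by
  obtain ⟨i, hi, rfl⟩ := mem_up.1 h
  intro hs
  have := weight_addCell hi
  rw [← hs] at this
  omega

def graph : SimpleGraph (Multiset ℕ) := SimpleGraph.fromRel fun s t => t ∈ up s

theorem graph_adj {s t : Multiset ℕ} : graph.Adj s t ↔ t ∈ down s ∪ up s := by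
  rw [graph, SimpleGraph.fromRel_adj, mem_union, ← mem_up_iff_mem_down]
  constructor
  · rintro ⟨-, h | h⟩
    exacts [Or.inr h, Or.inl h]
  · rintro (h | h)
    exacts [⟨(ne_of_mem_up h).symm, Or.inr h⟩, ⟨ne_of_mem_up h, Or.inl h⟩]

instance : graph.LocallyFinite := fun s =>
  Fintype.ofFinset (down s ∪ up s) fun _ => graph_adj.symm

theorem neighborFinset_graph (s : Multiset ℕ) : graph.neighborFinset s = down s ∪ up s := by
  ext t
  rw [SimpleGraph.mem_neighborFinset, graph_adj]

theorem doubleFactorial_le_card_walks (n : ℕ) :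
    (2 * n - 1)‼ ≤ #(graph.finsetWalkLength (2 * n) 0 0) := by
  have hnil : #(graph.finsetWalkLength 0 0 0) = 1 := by simp [SimpleGraph.finsetWalkLength]
  have hdown : down 0 = ∅ := by simp [down]
  simpa [hnil] using isDifferentialLE.doubleFactorial_mul_le
    (g := fun m s => #(graph.finsetWalkLength m s 0))
    (fun m s => by rw [graph.card_finsetWalkLength_succ, neighborFinset_graph,
      sum_union (disjoint_down_up s)]) hdown n

end YoungLattice

theorem Step.weight_le {a b : Multiset ℕ} (h : Step a b) : weight b ≤ weight a + 1 := by
  rcases h with rfl | (⟨h0, rfl⟩ | ⟨x, hx, -, rfl⟩) | ⟨x, hx, -, rfl⟩ | rfl |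
    ⟨x, hx, y, hy, -, -, rfl⟩
  · exact (weight_cons 0 a).le
  · rw [weight_cons, weight_erase h0]
  · rw [weight_cons, weight_erase hx]; omega
  · rw [weight_cons, weight_erase hx]; omega
  · rw [weight_cons]; omega
  · rw [weight_cons, weight_erase hx, weight_erase hy]; omega

theorem IsGame.weight_le {n : ℕ} {P : Fin (2 * n + 2 + 1) → Multiset ℕ} (hP : IsGame n P)
    (j : Fin (2 * n + 2 + 1)) : weight (P j) ≤ j := by
  induction j using Fin.induction with
  | zero => simp [hP.1, weight]
  | succ i ih => exact (hP.2.2.1 i).weight_le.trans (by simpa using ih)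

theorem le_nsmul_range_of_weight_le {s : Multiset ℕ} {N : ℕ} (h : weight s ≤ N) :
    s ≤ N • Multiset.range (N + 1) := by
  rw [Multiset.le_iff_count]
  intro a
  rw [Multiset.count_nsmul]
  by_cases ha : a ∈ s
  · have hsum : a ≤ s.sum := Multiset.le_sum_of_mem ha
    have hcount : s.count a ≤ Multiset.card s := Multiset.count_le_card a s
    unfold weight at h
    rw [Multiset.count_eq_one_of_mem (Multiset.nodup_range _) (Multiset.mem_range.2 (by omega))]
    omega
  · rw [Multiset.count_eq_zero_of_notMem ha]
    exact Nat.zero_le _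

instance finite_isGame (n : ℕ) :
    Finite {P : Fin (2 * n + 2 + 1) → Multiset ℕ // IsGame n P} :=
  Set.Finite.to_subtype <|
    (Set.Finite.pi fun _ => Set.finite_Iic ((2 * n + 2) • Multiset.range (2 * n + 2 + 1))).subset
      fun _ hP j _ => le_nsmul_range_of_weight_le
        ((IsGame.weight_le hP j).trans (Nat.le_of_lt_succ j.isLt))

open YoungLattice

theorem step_zero_cons_addCell {i : ℕ} {r : Multiset ℕ} (hi : CanAddCell i r) :
    Step (0 ::ₘ r) (0 ::ₘ addCell i r) := by
  match i with
  | 0 => exact Or.inl rfl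
  | 1 =>
    refine Or.inr (Or.inl (Or.inl ⟨Multiset.mem_cons_self _ _, ?_⟩))
    rw [Multiset.erase_cons_head, addCell, Multiset.cons_swap,
      Multiset.cons_erase (canAddCell_succ.1 hi)]
  | k + 2 =>
    have hk : k + 1 ∈ r := canAddCell_succ.1 hi
    refine Or.inr (Or.inl (Or.inr ⟨k + 1, Multiset.mem_cons_of_mem hk, by omega, ?_⟩))
    rw [Multiset.erase_cons_tail_of_mem hk, addCell, Multiset.cons_swap]

theorem step_addCell_zero_cons {i : ℕ} {r : Multiset ℕ} (hi : CanAddCell i r) :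
    Step (0 ::ₘ addCell i r) (0 ::ₘ r) := by
  match i with
  | 0 => exact Or.inr (Or.inr (Or.inr (Or.inl rfl)))
  | k + 1 =>
    refine Or.inr (Or.inr (Or.inl ⟨k + 1, by simp [addCell], by omega, ?_⟩))
    rw [addCell, Multiset.erase_cons_tail_of_mem (by simp), Multiset.erase_cons_head,
      Nat.add_sub_cancel, Multiset.cons_swap, Multiset.cons_erase (canAddCell_succ.1 hi)]

theorem step_of_adj {s t : Multiset ℕ} (h : graph.Adj s t) : Step (0 ::ₘ s) (0 ::ₘ t) := by
  rcases mem_union.1 (graph_adj.1 h) with h | h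
  · obtain ⟨i, hi, rfl⟩ := mem_down.1 h
    exact step_addCell_zero_cons hi
  · obtain ⟨i, hi, rfl⟩ := mem_up.1 h
    exact step_zero_cons_addCell hi

def gameOfWalk (n : ℕ) (p : graph.Walk 0 0) (j : Fin (2 * n + 2 + 1)) : Multiset ℕ :=
  if (j : ℕ) = 0 ∨ (j : ℕ) = 2 * n + 2 then 0 else 0 ::ₘ p.getVert (j - 1)

theorem isGame_gameOfWalk {n : ℕ} {p : graph.Walk 0 0} (hp : p.length = 2 * n) :
    IsGame n (gameOfWalk n p) := by
  refine ⟨by simp [gameOfWalk], by simp [gameOfWalk], fun ⟨i, hi⟩ => ?_, fun j hj0 hjl => ?_⟩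
  · simp only [Fin.castSucc_mk, Fin.succ_mk]
    rcases i with _ | i
    · simp only [gameOfWalk]
      rw [if_pos (Or.inl trivial), if_neg (by omega), Nat.add_sub_cancel, p.getVert_zero]
      exact Or.inl rfl
    rcases eq_or_ne i (2 * n) with rfl | hmid
    · simp only [gameOfWalk]
      rw [if_neg (by omega), if_pos (Or.inr trivial), Nat.add_sub_cancel, ← hp, p.getVert_length]
      exact Or.inr (Or.inr (Or.inr (Or.inl rfl)))
    · simp only [gameOfWalk]
      rw [if_neg (by omega), if_neg (by omega), Nat.add_sub_cancel]
      exact step_of_adj (p.adj_getVert_succ (by omega))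
  · rw [gameOfWalk, if_neg]
    · exact Multiset.cons_ne_zero
    · rintro (h | h)
      exacts [hj0 (Fin.ext h), hjl (Fin.ext h)]

theorem gameOfWalk_injective {n : ℕ} {p q : graph.Walk 0 0} (hp : p.length = 2 * n)
    (hq : q.length = 2 * n) (h : gameOfWalk n p = gameOfWalk n q) : p = q := by
  refine SimpleGraph.Walk.ext_getVert_le_length (hp.trans hq.symm) fun k hk => ?_
  simpa [gameOfWalk, show k ≠ 2 * n + 1 by omega] using congrFun h ⟨k + 1, by omega⟩

/-- The number `M n` of games of plates and olives of length `n` satisfies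
`M n ≥ (2n-1)!!`. -/
theorem stmt_10 (n : ℕ) : Nat.doubleFactorial (2 * n - 1) ≤ M n := by
  calc (2 * n - 1)‼ ≤ #(graph.finsetWalkLength (2 * n) 0 0) := doubleFactorial_le_card_walks n
    _ = Nat.card {p : graph.Walk 0 0 // p.length = 2 * n} := by
      rw [Nat.card_eq_fintype_card, ← SimpleGraph.card_set_walk_length_eq]
      rfl
    _ ≤ M n := Nat.card_le_card_of_injective
      (fun p => ⟨gameOfWalk n p, isGame_gameOfWalk p.2⟩)
      fun p q h => Subtype.ext (gameOfWalk_injective p.2 q.2 (congrArg Subtype.val h))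
end

section
/- The number M_n of games of plates and olives of length n satisfies M_n ≤ 108^n · n^n for all sufficiently large n. -/
/-
A game is determined by its moves, and a move out of a table `a` is determined by its kind (six
possibilities) together with the plates it acts on: none for `P+`, `O+_f`, `P-_s`, one for `O+_l`,
`O-` and two for `P-_c`. A plate is pinned down by the rank of its olive count among the distinct
positive counts on `a`. Every move changes the number of plates plus the number of olives by at
most one, so no table carries more than `n + 1` olives, hence it has at most `R = √(2n+2)` distinct
positive counts. A move choosing `w` plates changes the number of plates by at most `1 - w`, and
that number starts and ends at zero, so at most `2n+2` plates are chosen in total. This leaves at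
most `6^(2n+2) R^(2n+2) ≤ (72(n+1))^(n+1)` games, which is below `108^n n^n` once `n ≥ 40`.
-/

open Finset

theorem card_le_of_exists_transitions {α T : Type*} [Finite T] {m : ℕ}
    (p : (Fin (m + 1) → α) → Prop) (a₀ : α) (f : T → Fin m → α → α)
    (h0 : ∀ P, p P → P 0 = a₀) (hf : ∀ P, p P → ∃ t, ∀ i, P i.succ = f t i (P i.castSucc)) :
    Nat.card {P // p P} ≤ Nat.card T := by
  choose code hcode using hf
  refine Nat.card_le_card_of_injective (fun P => code P.1 P.2) fun P Q hPQ => ?_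
  ext1; funext i
  induction i using Fin.induction with
  | zero => rw [h0 _ P.2, h0 _ Q.2]
  | succ i ih => rw [hcode _ P.2, hcode _ Q.2, ih]; exact congrArg (f · i _) hPQ

theorem Fin.sum_add_le_of_forall_add_le {m : ℕ} (w : Fin m → ℕ) (c : Fin (m + 1) → ℕ)
    (h : ∀ i, w i + c i.succ ≤ c i.castSucc + 1) : ∑ i, w i + c (Fin.last m) ≤ m + c 0 := by
  have hsum := Finset.sum_le_sum fun i (_ : i ∈ univ) => h i
  rw [sum_add_distrib, sum_add_distrib] at hsum
  have hc := (Fin.sum_univ_succ c).symm.trans (Fin.sum_univ_castSucc c)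
  simp only [sum_const, smul_eq_mul, mul_one] at hsum
  omega

theorem Fin.le_add_val_of_forall_succ_le {m : ℕ} {g : Fin (m + 1) → ℕ}
    (h : ∀ i : Fin m, g i.succ ≤ g i.castSucc + 1) (i : Fin (m + 1)) : g i ≤ g 0 + i := by
  induction i using Fin.induction with
  | zero => simp
  | succ i ih => have := h i; simp only [Fin.val_succ, Fin.val_castSucc] at *; omega

theorem Fin.add_val_le_of_forall_castSucc_le {m : ℕ} {g : Fin (m + 1) → ℕ}
    (h : ∀ i : Fin m, g i.castSucc ≤ g i.succ + 1) (i : Fin (m + 1)) :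
    g i + i ≤ g (Fin.last m) + m := by
  induction i using Fin.reverseInduction with
  | last => simp
  | cast i ih => have := h i; simp only [Fin.val_succ, Fin.val_castSucc] at *; omega

theorem Finset.card_mul_card_add_one_le_two_mul_sum {s : Finset ℕ} (hs : ∀ x ∈ s, 0 < x) :
    #s * (#s + 1) ≤ 2 * ∑ x ∈ s, x := by
  have h := sum_range_le_sum (s := s.map Nat.castEmbedding) (c := 1)
    (by simpa [Nat.one_le_iff_ne_zero, Nat.pos_iff_ne_zero] using hs)
  have gauss := sum_range_id_mul_two (#s + 1)
  rw [sum_range_succ', add_tsub_cancel_right, add_zero] at gauss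
  rw [card_map, sum_map] at h
  zify at gauss ⊢
  push_cast [Nat.castEmbedding_apply] at gauss h
  linarith [show ∑ n ∈ range #s, (1 + (n : ℤ)) = ∑ n ∈ range #s, ((n : ℤ) + 1) from
    sum_congr rfl fun _ _ => add_comm _ _]

def posPlates (a : Multiset ℕ) : Finset ℕ := a.toFinset.filter (0 < ·)

theorem card_posPlates_le_sqrt {a : Multiset ℕ} {s : ℕ} (ha : a.sum ≤ s) :
    #(posPlates a) ≤ Nat.sqrt (2 * s) := by
  have hsum : ∑ x ∈ posPlates a, x ≤ a.sum := by
    obtain ⟨u, hu⟩ := Multiset.le_iff_exists_add.1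
      ((Multiset.filter_le _ _).trans (Multiset.dedup_le a) : (posPlates a).val ≤ a)
    rw [← Finset.sum_map_val, Multiset.map_id', congrArg Multiset.sum hu, Multiset.sum_add]
    exact Nat.le_add_right _ _
  have := card_mul_card_add_one_le_two_mul_sum (s := posPlates a) fun x hx => (mem_filter.1 hx).2
  rw [Nat.le_sqrt]
  nlinarith

def plateAt (a : Multiset ℕ) (r : ℕ) : ℕ := ((posPlates a).sort (· ≤ ·)).getD r 0

theorem exists_plateAt_eq {a : Multiset ℕ} {x : ℕ} (hx : x ∈ a) (hpos : 0 < x) :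
    ∃ r < #(posPlates a), plateAt a r = x := by
  have hmem : x ∈ (posPlates a).sort (· ≤ ·) := by simp [posPlates, hx, hpos]
  obtain ⟨r, hr, rfl⟩ := List.mem_iff_getElem.1 hmem
  exact ⟨r, by simpa using hr, List.getD_eq_getElem _ 0 hr⟩

/- Moves are encoded by a kind `0, …, 5` (`P+`, `O+_f`, `O+_l`, `O-`, `P-_s`, `P-_c`) and the
olive counts `x`, `y` of the plates they act on; `moveWeight k` of these must be chosen. -/
def moveWeight : Fin 6 → ℕ
  | 2 | 3 => 1
  | 5 => 2
  | _ => 0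

def applyMove (a : Multiset ℕ) (x y : ℕ) : Fin 6 → Multiset ℕ
  | 0 => 0 ::ₘ a
  | 1 => 1 ::ₘ a.erase 0
  | 2 => (x + 1) ::ₘ a.erase x
  | 3 => (x - 1) ::ₘ a.erase x
  | 4 => a.erase 0
  | 5 => (x + y) ::ₘ (a.erase x).erase y

theorem Step.exists_code {a b : Multiset ℕ} (hs : Step a b) {R : ℕ} (hR : #(posPlates a) ≤ R) :
    ∃ k : Fin 6, ∃ j < R ^ moveWeight k,
      b = applyMove a (plateAt a (j % R)) (plateAt a (j / R)) k ∧
      moveWeight k + Multiset.card b ≤ Multiset.card a + 1 := by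
  have one_plate : ∀ x ∈ a, 0 < x → ∃ j < R, plateAt a (j % R) = x := fun x hx hpos => by
    obtain ⟨r, hr, rfl⟩ := exists_plateAt_eq hx hpos
    exact ⟨r, by omega, by rw [Nat.mod_eq_of_lt (by omega)]⟩
  rcases hs with rfl | (⟨h0, rfl⟩ | ⟨x, hx, hpos, rfl⟩) | ⟨x, hx, hpos, rfl⟩ | rfl |
    ⟨x, hx, y, hy, hxpos, hypos, rfl⟩
  · exact ⟨0, 0, by simp [moveWeight], rfl, by simp [moveWeight]⟩
  · refine ⟨1, 0, by simp [moveWeight], rfl, ?_⟩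
    have := Multiset.card_erase_add_one h0
    simp only [moveWeight, Multiset.card_cons]; omega
  · obtain ⟨j, hj, rfl⟩ := one_plate x hx hpos
    refine ⟨2, j, by simpa [moveWeight] using hj, rfl, ?_⟩
    have := Multiset.card_erase_add_one hx
    simp only [moveWeight, Multiset.card_cons]; omega
  · obtain ⟨j, hj, rfl⟩ := one_plate x hx hpos
    refine ⟨3, j, by simpa [moveWeight] using hj, rfl, ?_⟩
    have := Multiset.card_erase_add_one hx
    simp only [moveWeight, Multiset.card_cons]; omega
  · refine ⟨4, 0, by simp [moveWeight], by simp [applyMove], ?_⟩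
    simp only [moveWeight, Multiset.card_cons]; omega
  · obtain ⟨r, hr, rfl⟩ := exists_plateAt_eq hx hxpos
    obtain ⟨s, hsR, rfl⟩ := exists_plateAt_eq (Multiset.mem_of_mem_erase hy) hypos
    have hR0 : 0 < R := by omega
    refine ⟨5, r + R * s, ?_, ?_, ?_⟩
    · simp only [moveWeight]; nlinarith
    · rw [Nat.add_mul_mod_self_left, Nat.mod_eq_of_lt (by omega), Nat.add_mul_div_left _ _ hR0,
        Nat.div_eq_of_lt (by omega), zero_add]
      rfl
    · have := Multiset.card_erase_add_one hx
      have := Multiset.card_erase_add_one hy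
      simp only [moveWeight, Multiset.card_cons]; omega

theorem Step.card_add_sum_le {a b : Multiset ℕ} (hs : Step a b) :
    Multiset.card b + b.sum ≤ Multiset.card a + a.sum + 1 ∧
      Multiset.card a + a.sum ≤ Multiset.card b + b.sum + 1 := by
  have erase : ∀ {c : Multiset ℕ} {x : ℕ}, x ∈ c →
      Multiset.card (c.erase x) + 1 = Multiset.card c ∧ x + (c.erase x).sum = c.sum :=
    fun hx => ⟨Multiset.card_erase_add_one hx, Multiset.sum_erase hx⟩
  rcases hs with rfl | (⟨h0, rfl⟩ | ⟨x, hx, -, rfl⟩) | ⟨x, hx, -, rfl⟩ | rfl |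
    ⟨x, hx, y, hy, -, -, rfl⟩
  · simp only [Multiset.card_cons, Multiset.sum_cons]; omega
  · have := erase h0
    simp only [Multiset.card_cons, Multiset.sum_cons]; omega
  · have := erase hx
    simp only [Multiset.card_cons, Multiset.sum_cons]; omega
  · have := erase hx
    simp only [Multiset.card_cons, Multiset.sum_cons]; omega
  · simp only [Multiset.card_cons, Multiset.sum_cons]; omega
  · have := erase hx
    have := erase hy
    simp only [Multiset.card_cons, Multiset.sum_cons]; omega

namespace IsGame

variable {n : ℕ} {P : Fin (2 * n + 2 + 1) → Multiset ℕ}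

theorem sum_le (hP : IsGame n P) (i : Fin (2 * n + 2 + 1)) : (P i).sum ≤ n + 1 := by
  let g i := Multiset.card (P i) + (P i).sum
  have hfwd := Fin.le_add_val_of_forall_succ_le (g := g)
    (fun j => (Step.card_add_sum_le (hP.2.2.1 j)).1) i
  have hbwd := Fin.add_val_le_of_forall_castSucc_le (g := g)
    (fun j => (Step.card_add_sum_le (hP.2.2.1 j)).2) i
  simp only [g, hP.1, hP.2.1, Multiset.card_zero, Multiset.sum_zero] at hfwd hbwd
  omega

theorem card_posPlates_le (hP : IsGame n P) (i : Fin (2 * n + 2 + 1)) :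
    #(posPlates (P i)) ≤ Nat.sqrt (2 * n + 2) :=
  card_posPlates_le_sqrt (sum_le hP i)

end IsGame

abbrev MoveCodes (m R : ℕ) : Type :=
  Σ w : {w : Fin m → Fin 6 // ∑ i, moveWeight (w i) ≤ m}, ∀ i, Fin (R ^ moveWeight (w.1 i))

theorem card_moveCodes_le {m R : ℕ} (hR : 0 < R) : Nat.card (MoveCodes m R) ≤ 6 ^ m * R ^ m := by
  rw [Nat.card_eq_fintype_card, Fintype.card_sigma]
  simp only [Fintype.card_pi, Fintype.card_fin]
  calc ∑ w : {w : Fin m → Fin 6 // ∑ i, moveWeight (w i) ≤ m}, ∏ i, R ^ moveWeight (w.1 i)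
      ≤ ∑ _w : {w : Fin m → Fin 6 // ∑ i, moveWeight (w i) ≤ m}, R ^ m := by
        gcongr with w
        rw [prod_pow_eq_pow_sum]
        exact Nat.pow_le_pow_right hR w.2
    _ ≤ 6 ^ m * R ^ m := by
        rw [sum_const, card_univ, smul_eq_mul]
        gcongr
        simpa using Fintype.card_subtype_le (fun w : Fin m → Fin 6 => ∑ i, moveWeight (w i) ≤ m)

/- The plates chosen by a move are given by their ranks `r`, `s` among the distinct positive olive
counts, packed into the single code `r + R * s < R ^ moveWeight k`. -/
def decodeMove {m : ℕ} (R : ℕ) (t : MoveCodes m R) (i : Fin m) (a : Multiset ℕ) : Multiset ℕ :=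
  applyMove a (plateAt a (t.2 i % R)) (plateAt a (t.2 i / R)) (t.1.1 i)

theorem IsGame.exists_moveCodes {n : ℕ} {P : Fin (2 * n + 2 + 1) → Multiset ℕ} (hP : IsGame n P) :
    ∃ t : MoveCodes (2 * n + 2) (Nat.sqrt (2 * n + 2)),
      ∀ i, P i.succ = decodeMove _ t i (P i.castSucc) := by
  choose k j hj hb hcard using fun i : Fin (2 * n + 2) =>
    Step.exists_code (hP.2.2.1 i) (IsGame.card_posPlates_le hP i.castSucc)
  have hw : ∑ i, moveWeight (k i) ≤ 2 * n + 2 := by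
    simpa [hP.1, hP.2.1] using
      Fin.sum_add_le_of_forall_add_le (fun i => moveWeight (k i)) (fun i => Multiset.card (P i)) hcard
  exact ⟨⟨⟨k, hw⟩, fun i => ⟨j i, hj i⟩⟩, hb⟩

theorem M_le_six_pow_mul_sqrt_pow (n : ℕ) : M n ≤ 6 ^ (2 * n + 2) * Nat.sqrt (2 * n + 2) ^ (2 * n + 2) :=
  (card_le_of_exists_transitions (IsGame n) 0 (decodeMove _) (fun _ hP => hP.1)
    (fun _ hP => hP.exists_moveCodes)).trans (card_moveCodes_le (Nat.sqrt_pos.2 (by omega)))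

theorem six_pow_mul_sqrt_pow_le (n : ℕ) :
    6 ^ (2 * n + 2) * Nat.sqrt (2 * n + 2) ^ (2 * n + 2) ≤ (72 * (n + 1)) ^ (n + 1) := by
  rw [show 2 * n + 2 = 2 * (n + 1) by ring, pow_mul, pow_mul, ← mul_pow]
  refine Nat.pow_le_pow_left ?_ _
  have := Nat.sqrt_le' (2 * (n + 1))
  omega

theorem mul_succ_mul_four_pow_le_five_pow {n : ℕ} (hn : 40 ≤ n) : 72 * (n + 1) * 4 ^ n ≤ 5 ^ n := by
  induction n, hn using Nat.le_induction with
  | base => norm_num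
  | succ k hk ih =>
    calc 72 * (k + 1 + 1) * 4 ^ (k + 1) ≤ 5 * (72 * (k + 1) * 4 ^ k) := by
          rw [pow_succ]; nlinarith [pow_pos (by norm_num : (0 : ℕ) < 4) k]
      _ ≤ 5 ^ (k + 1) := by rw [pow_succ']; gcongr

theorem mul_succ_pow_succ_le {n : ℕ} (hn : 40 ≤ n) : (72 * (n + 1)) ^ (n + 1) ≤ 108 ^ n * n ^ n := by
  have key : 5 ^ n * (72 * (n + 1)) ^ n ≤ 4 ^ n * (108 * n) ^ n := by
    rw [← mul_pow, ← mul_pow]; exact Nat.pow_le_pow_left (by omega) _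
  refine Nat.le_of_mul_le_mul_left ?_ (pow_pos (by norm_num : (0 : ℕ) < 5) n)
  calc 5 ^ n * (72 * (n + 1)) ^ (n + 1) = 72 * (n + 1) * (5 ^ n * (72 * (n + 1)) ^ n) := by ring
    _ ≤ 72 * (n + 1) * (4 ^ n * (108 * n) ^ n) := by gcongr
    _ = 72 * (n + 1) * 4 ^ n * (108 * n) ^ n := by ring
    _ ≤ 5 ^ n * (108 ^ n * n ^ n) := by rw [← mul_pow]; gcongr; exact mul_succ_mul_four_pow_le_five_pow hn

/-- The number `M n` of games of plates and olives of length `n` satisfies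
`M n ≤ 108^n · n^n` for all sufficiently large `n`. -/
theorem stmt_11 : ∃ N : ℕ, ∀ n ≥ N, M n ≤ 108 ^ n * n ^ n :=
  ⟨40, fun n hn => ((M_le_six_pow_mul_sqrt_pow n).trans (six_pow_mul_sqrt_pow_le n)).trans (mul_succ_pow_succ_le hn)⟩
end
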